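/- Let T be a finite rooted ordered tree with N nodes and let f ≥ 1 be an integer. Let Min_f be the set of nodes v of T such that the subtree rooted at v has more than f nodes while, for every child c of v, the subtree rooted at c has at most f nodes. Then |Min_f|·(f+1) ≤ N; in particular |Min_f| ≤ N/f. -/

import Mathlib

/-- A finite rooted ordered tree: a single constructor taking the list of subtrees. -/
inductive OTree where
  | node : List OTree → OTree

/-- The number of nodes of a tree. -/
def numNodes : OTree → ℕ
  | .node ts => 1 + (ts.attach.map fun ⟨t, _⟩ => numNodes t).sum

/-- The list of children (subtrees) of the root. -/
def childrenOf : OTree → List OTree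
  | .node ts => ts

/-- The subtree of `T` rooted at the node addressed by a path of child indices
(0-based); `none` if the path is not a valid node address of `T`. -/
def subtreeAt : OTree → List ℕ → Option OTree
  | t, [] => some t
  | .node ts, n :: p =>
    match ts[n]? with
    | some t => subtreeAt t p
    | none => none

lemma numNodes_node (ts : List OTree) :
    numNodes (.node ts) = 1 + (ts.map numNodes).sum := by
  rw [numNodes]
  congr 1
  rw [show (fun (x : {t // t ∈ ts}) => numNodes x.1) = numNodes ∘ Subtype.val from rfl,
    ← List.map_map, List.attach_map_subtype_val]

lemma one_le_numNodes (t : OTree) : 1 ≤ numNodes t := by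
  cases t with
  | node ts => rw [numNodes_node]; omega

lemma numNodes_lt_of_mem {s : OTree} {ts : List OTree} (h : s ∈ ts) :
    numNodes s < numNodes (.node ts) := by
  rw [numNodes_node]
  have := List.le_sum_of_mem (List.mem_map_of_mem (f := numNodes) h)
  omega

lemma numNodes_subtreeAt_le : ∀ (p : List ℕ) (t u : OTree),
    subtreeAt t p = some u → numNodes u ≤ numNodes t := by
  intro p
  induction p with
  | nil => intro t u h; rw [subtreeAt] at h; cases h; exact le_refl _
  | cons n q ih =>
    rintro ⟨ts⟩ u h
    rw [subtreeAt] at h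
    cases hn : ts[n]? with
    | none => rw [hn] at h; cases h
    | some s =>
      rw [hn] at h
      exact (ih s u h).trans (numNodes_lt_of_mem (List.mem_of_getElem? hn)).le

lemma subtreeAt_cons_some {ts : List OTree} {n : ℕ} {s : OTree} (p : List ℕ)
    (h : ts[n]? = some s) : subtreeAt (.node ts) (n :: p) = subtreeAt s p := by
  rw [subtreeAt, h]

lemma subtreeAt_cons_none {ts : List OTree} {n : ℕ} (p : List ℕ)
    (h : ts[n]? = none) : subtreeAt (.node ts) (n :: p) = none := by
  rw [subtreeAt, h]

mutual
/-- Addresses of minimal big subtrees. -/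
def minT (f : ℕ) : OTree → List (List ℕ)
  | .node ts =>
    if ∀ s ∈ ts, numNodes s ≤ f then
      (if f < numNodes (.node ts) then [[]] else [])
    else minL f 0 ts

def minL (f : ℕ) (i : ℕ) : List OTree → List (List ℕ)
  | [] => []
  | t :: ts => (minT f t).map (i :: ·) ++ minL f (i + 1) ts
end

lemma mem_minL (f : ℕ) : ∀ (ts : List OTree) (i : ℕ) (p : List ℕ),
    p ∈ minL f i ts ↔
      ∃ n q t, p = (i + n) :: q ∧ ts[n]? = some t ∧ q ∈ minT f t := by
  intro ts
  induction ts with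
  | nil =>
    intro i p
    simp [minL]
  | cons t ts ih =>
    intro i p
    rw [minL, List.mem_append, List.mem_map, ih]
    constructor
    · rintro (⟨q, hq, rfl⟩ | ⟨n, q, t', rfl, h1, h2⟩)
      · exact ⟨0, q, t, by simp, by simp, hq⟩
      · exact ⟨n + 1, q, t', by ring_nf, by simpa using h1, h2⟩
    · rintro ⟨n, q, t', rfl, h1, h2⟩
      cases n with
      | zero =>
        left
        simp only [List.getElem?_cons_zero, Option.some.injEq] at h1
        subst h1
        exact ⟨q, h2, by simp⟩
      | succ m =>
        right
        refine ⟨m, q, t', by ring_nf, by simpa using h1, h2⟩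

lemma mem_minT (f : ℕ) : ∀ (t : OTree) (p : List ℕ),
    p ∈ minT f t ↔ ∃ u, subtreeAt t p = some u ∧ f < numNodes u ∧
      ∀ s ∈ childrenOf u, numNodes s ≤ f := by
  suffices H : ∀ (N : ℕ) (t : OTree), numNodes t ≤ N → ∀ p,
      p ∈ minT f t ↔ ∃ u, subtreeAt t p = some u ∧ f < numNodes u ∧
        ∀ s ∈ childrenOf u, numNodes s ≤ f by
    intro t p; exact H (numNodes t) t le_rfl p
  intro N
  induction N with
  | zero => intro t h; exact absurd h (by have := one_le_numNodes t; omega)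
  | succ N ih =>
    rintro ⟨ts⟩ hN p
    have hch : ∀ s ∈ ts, numNodes s ≤ N := fun s hs =>
      by have := numNodes_lt_of_mem hs; omega
    rw [minT]
    by_cases hsmall : ∀ s ∈ ts, numNodes s ≤ f
    · rw [if_pos hsmall]
      cases p with
      | nil =>
        constructor
        · intro hp
          split at hp
          · exact ⟨.node ts, rfl, by assumption, hsmall⟩
          · simp at hp
        · rintro ⟨u, hu, h1, h2⟩
          rw [subtreeAt] at hu; cases hu
          rw [if_pos h1]; simp
      | cons n q =>
        constructor
        · intro hp; split at hp <;> simp at hp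
        · rintro ⟨u, hu, h1, h2⟩
          rw [subtreeAt] at hu
          cases hn : ts[n]? with
          | none => rw [hn] at hu; cases hu
          | some s =>
            rw [hn] at hu
            have hs : s ∈ ts := List.mem_of_getElem? hn
            have := numNodes_subtreeAt_le q s u hu
            have := hsmall s hs
            omega
    · rw [if_neg hsmall, mem_minL]
      push_neg at hsmall
      obtain ⟨b, hb, hbf⟩ := hsmall
      cases p with
      | nil =>
        constructor
        · rintro ⟨n, q, t', he, _⟩; simp at he
        · rintro ⟨u, hu, h1, h2⟩
          rw [subtreeAt] at hu; cases hu
          exact absurd (h2 b hb) (by omega)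
      | cons n q =>
        constructor
        · rintro ⟨m, q', t', he, h1, h2⟩
          simp only [List.cons.injEq] at he
          obtain ⟨he1, rfl⟩ := he
          have hm : m = n := by omega
          subst hm
          rw [subtreeAt_cons_some q h1]
          exact (ih t' (hch t' (List.mem_of_getElem? h1)) q).mp h2
        · intro h
          cases hn : ts[n]? with
          | none =>
            rw [subtreeAt_cons_none q hn] at h
            obtain ⟨u, hu, _⟩ := h; cases hu
          | some s =>
            rw [subtreeAt_cons_some q hn] at h
            exact ⟨n, q, s, by simp, hn, (ih s (hch s (List.mem_of_getElem? hn)) q).mpr h⟩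

lemma minL_head (f : ℕ) : ∀ (ts : List OTree) (i : ℕ) (p : List ℕ),
    p ∈ minL f i ts → ∃ n q, p = n :: q ∧ i ≤ n := by
  intro ts i p hp
  rw [mem_minL] at hp
  obtain ⟨n, q, t, rfl, _⟩ := hp
  exact ⟨i + n, q, rfl, by omega⟩

mutual
lemma nodup_minT (f : ℕ) : ∀ t : OTree, (minT f t).Nodup
  | .node ts => by
    rw [minT]
    split
    · split <;> simp
    · exact nodup_minL f 0 ts

lemma nodup_minL (f : ℕ) : ∀ (i : ℕ) (ts : List OTree), (minL f i ts).Nodup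
  | i, [] => by simp [minL]
  | i, t :: ts => by
    rw [minL]
    refine List.Nodup.append ((nodup_minT f t).map (by intro a b h; injection h))
      (nodup_minL f (i + 1) ts) ?_
    intro p hp hp'
    obtain ⟨q, _, rfl⟩ := List.mem_map.mp hp
    obtain ⟨n, q', he, hn⟩ := minL_head f ts (i + 1) _ hp'
    injection he with h1 _
    omega
end

mutual
lemma len_minT (f : ℕ) : ∀ t : OTree, (minT f t).length * (f + 1) ≤ numNodes t
  | .node ts => by
    rw [minT]
    split
    · split
      · have : f + 1 ≤ numNodes (.node ts) := by omega
        simpa using this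
      · simp
    · calc (minL f 0 ts).length * (f + 1) ≤ (ts.map numNodes).sum := len_minL f 0 ts
        _ ≤ numNodes (.node ts) := by rw [numNodes_node]; omega

lemma len_minL (f : ℕ) : ∀ (i : ℕ) (ts : List OTree),
    (minL f i ts).length * (f + 1) ≤ (ts.map numNodes).sum
  | i, [] => by simp [minL]
  | i, t :: ts => by
    rw [minL]
    simp only [List.length_append, List.length_map, List.map_cons, List.sum_cons]
    have h1 := len_minT f t
    have h2 := len_minL f (i + 1) ts
    nlinarith
end

/-- let `T` have `N` nodes and `f ≥ 1`; let `Min_f` be the set of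
nodes `v` of `T` (given by their addresses) whose subtree has more than `f`
nodes while every child subtree has at most `f` nodes. Then
`|Min_f|·(f+1) ≤ N`; in particular `|Min_f| ≤ N/f`. -/
theorem stmt12 (T : OTree) (f : ℕ) (hf : 1 ≤ f) :
    {p : List ℕ | ∃ t, subtreeAt T p = some t ∧ f < numNodes t ∧
        ∀ s ∈ childrenOf t, numNodes s ≤ f}.ncard * (f + 1) ≤ numNodes T ∧
    {p : List ℕ | ∃ t, subtreeAt T p = some t ∧ f < numNodes t ∧
        ∀ s ∈ childrenOf t, numNodes s ≤ f}.ncard ≤ numNodes T / f := by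
  have hset : {p : List ℕ | ∃ t, subtreeAt T p = some t ∧ f < numNodes t ∧
      ∀ s ∈ childrenOf t, numNodes s ≤ f} = ↑(minT f T).toFinset := by
    ext p
    simp only [Set.mem_setOf_eq, Finset.coe_sort_coe, List.coe_toFinset, Set.mem_setOf_eq,
      ← mem_minT f T p]
  rw [hset]
  rw [Set.ncard_coe_finset, List.toFinset_card_of_nodup (nodup_minT f T)]
  have h1 := len_minT f T
  refine ⟨h1, ?_⟩
  rw [Nat.le_div_iff_mul_le (by omega)]
  nlinarith
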